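/- Let ℓ ≥ 3, 0 ≤ k ≤ ℓ, r ≥ 2, and assume (k,ℓ,r) ≠ (0,3,2). Then X ∈ L(A^k_ℓ(r)) is modular if and only if X lies in the lattice of the Boolean subarrangement B^k_ℓ = {H_1,...,H_k}, or X is a hyperplane of A^k_ℓ(r), or X ∈ {0, ℂ^ℓ}. -/

import Mathlib

/-!
Every element of the intersection lattice is cut out by equations `x_t = 0` and
`x_p = ν x_q` with `ν ^ r = 1`. If `X` is an intersection of coordinate hyperplanes `x_t = 0`
with `t < k`, then `X + Y` is cut out by those equations of `Y` that only involve such `t`, so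
`X` is modular. For any other `X` except `0`, `ℂ^ℓ` and the hyperplanes, one exhibits `Y` in the
lattice such that `X + Y` lies in a proper subspace but in no hyperplane of the arrangement.
`Y` is built from ratios differing from those of `X`, available since `r ≥ 2`; only when
`ℓ = 3` and `X` is a line with all three coordinates linked does this need a coordinate
hyperplane (`k ≥ 1`) or a third root of unity (`r ≥ 3`), hence the exception
`(k, ℓ, r) = (0, 3, 2)`.
-/

open Submodule

/-- The intersection lattice of the arrangement `A` with ambient space `Z`:
all subspaces of the form `Z ⊓ sInf S` for `S ⊆ A` (the empty intersection gives `Z`). -/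
def ArrLatIn {V : Type*} [AddCommGroup V] [Module ℂ V] (Z : Submodule ℂ V)
    (A : Set (Submodule ℂ V)) : Set (Submodule ℂ V) :=
  {X | ∃ S ⊆ A, X = Z ⊓ sInf S}

/-- `X` is a modular element of the lattice `ℒ` (ordered by reverse inclusion):
`X ∈ ℒ` and `X + Y ∈ ℒ` for every `Y ∈ ℒ`. -/
def ModularIn {V : Type*} [AddCommGroup V] [Module ℂ V]
    (ℒ : Set (Submodule ℂ V)) (X : Submodule ℂ V) : Prop :=
  X ∈ ℒ ∧ ∀ Y ∈ ℒ, X ⊔ Y ∈ ℒ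

/-- The restriction of the arrangement `A` to the subspace `Z`:
the hyperplanes `Z ∩ H` for `H ∈ A` with `Z ⊄ H`. -/
def Restrict {V : Type*} [AddCommGroup V] [Module ℂ V]
    (A : Set (Submodule ℂ V)) (Z : Submodule ℂ V) : Set (Submodule ℂ V) :=
  {W | ∃ H ∈ A, ¬ Z ≤ H ∧ W = Z ⊓ H}

/-- A (lattice of subspaces ordered by reverse inclusion) is supersolvable if it admits a
maximal chain `C 0 > C 1 > ... > C n` (top to bottom) consisting of modular elements. -/
def LatSupersolvable {V : Type*} [AddCommGroup V] [Module ℂ V]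
    (ℒ : Set (Submodule ℂ V)) : Prop :=
  ∃ n, ∃ C : Fin (n + 1) → Submodule ℂ V,
    (∀ i, ModularIn ℒ (C i)) ∧
    (∀ W ∈ ℒ, W ≤ C 0) ∧
    (∀ W ∈ ℒ, C (Fin.last n) ≤ W) ∧
    (∀ i : Fin n, C i.succ < C i.castSucc) ∧
    (∀ i : Fin n, ∀ W ∈ ℒ, ¬(C i.succ < W ∧ W < C i.castSucc))

/-- The product of two arrangements. -/
def ProdArr {V₁ V₂ : Type*} [AddCommGroup V₁] [Module ℂ V₁] [AddCommGroup V₂] [Module ℂ V₂]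
    (A₁ : Set (Submodule ℂ V₁)) (A₂ : Set (Submodule ℂ V₂)) : Set (Submodule ℂ (V₁ × V₂)) :=
  ((fun H => H.prod (⊤ : Submodule ℂ V₂)) '' A₁) ∪
    ((fun H => (⊤ : Submodule ℂ V₁).prod H) '' A₂)

/-- The coordinate hyperplane `ker x_i` in `ℂ^ℓ`. -/
noncomputable def coordH (ℓ : ℕ) (i : Fin ℓ) : Submodule ℂ (Fin ℓ → ℂ) :=
  LinearMap.ker (LinearMap.proj i : (Fin ℓ → ℂ) →ₗ[ℂ] ℂ)

/-- The hyperplane `ker (x_i - ζ x_j)` in `ℂ^ℓ`. -/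
noncomputable def diffH (ℓ : ℕ) (i j : Fin ℓ) (ζ : ℂ) : Submodule ℂ (Fin ℓ → ℂ) :=
  LinearMap.ker ((LinearMap.proj i : (Fin ℓ → ℂ) →ₗ[ℂ] ℂ) - ζ • (LinearMap.proj j))

/-- The intermediate arrangement `A^k_ℓ(r)`: the first `k` coordinate hyperplanes together with
all hyperplanes `ker (x_i - ζ x_j)` for `i < j` and `ζ` an `r`-th root of unity. -/
def interArr (r ℓ k : ℕ) : Set (Submodule ℂ (Fin ℓ → ℂ)) :=
  {H | ∃ i : Fin ℓ, (i : ℕ) < k ∧ H = coordH ℓ i} ∪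
    {H | ∃ i j : Fin ℓ, i < j ∧ ∃ ζ : ℂ, ζ ^ r = 1 ∧ H = diffH ℓ i j ζ}

/-- The Boolean subarrangement `B^k_ℓ` of the first `k` coordinate hyperplanes of `ℂ^ℓ`. -/
def boolArr (ℓ k : ℕ) : Set (Submodule ℂ (Fin ℓ → ℂ)) :=
  {H | ∃ i : Fin ℓ, (i : ℕ) < k ∧ H = coordH ℓ i}

/-- The degree-one polynomial corresponding to a linear form on `ℂ^n`. -/
noncomputable def linPoly {n : ℕ} (f : (Fin n → ℂ) →ₗ[ℂ] ℂ) : MvPolynomial (Fin n) ℂ :=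
  ∑ i, MvPolynomial.C (f (Pi.single i 1)) * MvPolynomial.X i

/-- The module of derivations `D(Q) = {θ | θ(Q) ∈ Q·S}` is free with a homogeneous basis
`θ 0, ..., θ (n-1)` of polynomial degrees `e 0, ..., e (n-1)`. -/
def IsFreeWithExponents (n : ℕ) (Q : MvPolynomial (Fin n) ℂ) (e : Fin n → ℕ) : Prop :=
  ∃ θ : Fin n → Derivation ℂ (MvPolynomial (Fin n) ℂ) (MvPolynomial (Fin n) ℂ),
    (∀ i, θ i Q ∈ Ideal.span {Q}) ∧
    (∀ i j, ((θ i) (MvPolynomial.X j)).IsHomogeneous (e i)) ∧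
    (∀ c : Fin n → MvPolynomial (Fin n) ℂ, (∑ i, c i • θ i) = 0 → ∀ i, c i = 0) ∧
    (∀ η : Derivation ℂ (MvPolynomial (Fin n) ℂ) (MvPolynomial (Fin n) ℂ),
      η Q ∈ Ideal.span {Q} →
      ∃ c : Fin n → MvPolynomial (Fin n) ℂ, η = ∑ i, c i • θ i)

/-- An arrangement is irreducible if it is not a product of two nonempty arrangements, i.e.
there is no nontrivial direct sum decomposition of the ambient space such that every
hyperplane contains one of the two summands. -/
def IsIrreducibleArr {V : Type*} [AddCommGroup V] [Module ℂ V]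
    (A : Set (Submodule ℂ V)) : Prop :=
  ¬ ∃ V₁ V₂ : Submodule ℂ V, V₁ ≠ ⊥ ∧ V₂ ≠ ⊥ ∧ V₁ ⊓ V₂ = ⊥ ∧ V₁ ⊔ V₂ = ⊤ ∧
      ∀ H ∈ A, V₁ ≤ H ∨ V₂ ≤ H

/-- The restriction of `A` to the hyperplane `H` is linearly isomorphic to the intermediate
arrangement `A^{k'}_{ℓ'}(r)`. -/
def RestrEquiv (r ℓ : ℕ) (A : Set (Submodule ℂ (Fin ℓ → ℂ))) (H : Submodule ℂ (Fin ℓ → ℂ))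
    (ℓ' k' : ℕ) : Prop :=
  ∃ φ : (Fin ℓ' → ℂ) →ₗ[ℂ] (Fin ℓ → ℂ), Function.Injective φ ∧ LinearMap.range φ = H ∧
    Restrict A H = (fun K => Submodule.map φ K) '' interArr r ℓ' k'

section ArrangementLattice

variable {V : Type*} [AddCommGroup V] [Module ℂ V] {A : Set (Submodule ℂ V)}
  {X Y H : Submodule ℂ V}

theorem top_mem_arrLatIn : ⊤ ∈ ArrLatIn ⊤ A :=
  ⟨∅, Set.empty_subset A, by simp⟩

theorem mem_arrLatIn_of_mem (hH : H ∈ A) : H ∈ ArrLatIn ⊤ A :=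
  ⟨{H}, Set.singleton_subset_iff.2 hH, by simp⟩

theorem inf_mem_arrLatIn (hX : X ∈ ArrLatIn ⊤ A) (hY : Y ∈ ArrLatIn ⊤ A) :
    X ⊓ Y ∈ ArrLatIn ⊤ A := by
  obtain ⟨S, hS, rfl⟩ := hX
  obtain ⟨T, hT, rfl⟩ := hY
  exact ⟨S ∪ T, Set.union_subset hS hT, by simp [sInf_union]⟩

theorem eq_sInf_of_mem_arrLatIn (hX : X ∈ ArrLatIn ⊤ A) : X = sInf {H | H ∈ A ∧ X ≤ H} := by
  obtain ⟨S, hS, hXS⟩ := hX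
  rw [top_inf_eq] at hXS
  refine le_antisymm (le_sInf fun H hH => hH.2) (hXS ▸ sInf_le_sInf fun H hH => ?_)
  exact ⟨hS hH, hXS ▸ sInf_le hH⟩

theorem mem_arrLatIn_iff : X ∈ ArrLatIn ⊤ A ↔ ∀ v, (∀ H ∈ A, X ≤ H → v ∈ H) → v ∈ X := by
  refine ⟨fun hX v hv => ?_, fun h => ⟨{H | H ∈ A ∧ X ≤ H}, fun H hH => hH.1, ?_⟩⟩
  · rw [eq_sInf_of_mem_arrLatIn hX, mem_sInf]
    exact fun H hH => hv H hH.1 hH.2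
  · rw [top_inf_eq]
    exact le_antisymm (le_sInf fun H hH => hH.2)
      fun v hv => h v fun H hH hXH => mem_sInf.1 hv H ⟨hH, hXH⟩

theorem eq_of_mem_arrLatIn {H₀ : Submodule ℂ V} (hX : X ∈ ArrLatIn ⊤ A) (hXH₀ : X ≤ H₀)
    (h : ∀ H ∈ A, X ≤ H → H = H₀) : X = H₀ := by
  refine le_antisymm hXH₀ ?_
  rw [eq_sInf_of_mem_arrLatIn hX]
  exact le_sInf fun H hH => (h H hH.1 hH.2).ge

theorem modularIn_top : ModularIn (ArrLatIn ⊤ A) ⊤ :=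
  ⟨top_mem_arrLatIn, fun Y _ => by rw [top_sup_eq]; exact top_mem_arrLatIn⟩

theorem modularIn_bot (h : ⊥ ∈ ArrLatIn ⊤ A) : ModularIn (ArrLatIn ⊤ A) ⊥ :=
  ⟨h, fun Y hY => by rwa [bot_sup_eq]⟩

theorem modularIn_of_isCoatom (hH : H ∈ A) (hcoatom : IsCoatom H) :
    ModularIn (ArrLatIn ⊤ A) H := by
  refine ⟨mem_arrLatIn_of_mem hH, fun Y _ => ?_⟩
  rcases hcoatom.le_iff.1 (le_sup_left : H ≤ H ⊔ Y) with h | h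
  · rw [h]; exact top_mem_arrLatIn
  · rw [h]; exact mem_arrLatIn_of_mem hH

theorem not_modularIn_of_sup_ne_top (hY : Y ∈ ArrLatIn ⊤ A) (hXY : X ⊔ Y ≠ ⊤)
    (hsep : ∀ H ∈ A, X ≤ H → ¬ Y ≤ H) : ¬ ModularIn (ArrLatIn ⊤ A) X := by
  intro hX
  refine hXY (le_antisymm le_top ?_)
  rw [eq_sInf_of_mem_arrLatIn (hX.2 Y hY)]
  exact le_sInf fun H hH => absurd (le_sup_right.trans hH.2)
    (hsep H hH.1 (le_sup_left.trans hH.2))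

theorem sup_ne_top_of_le_ker {f : V →ₗ[ℂ] ℂ} {v : V} (hfv : f v ≠ 0) (hX : X ≤ LinearMap.ker f)
    (hY : Y ≤ LinearMap.ker f) : X ⊔ Y ≠ ⊤ := fun h =>
  hfv (LinearMap.mem_ker.1 (sup_le hX hY (h ▸ mem_top)))

end ArrangementLattice

theorem ne_zero_of_pow_eq_one {r : ℕ} {ζ : ℂ} (hr : r ≠ 0) (hζ : ζ ^ r = 1) : ζ ≠ 0 := by
  rintro rfl
  simp [zero_pow hr] at hζ

theorem exists_pow_eq_one_notMem {r : ℕ} (s : Finset ℂ) (hs : s.card < r) :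
    ∃ e : ℂ, e ^ r = 1 ∧ e ∉ s := by
  have hr : 0 < r := by omega
  obtain ⟨e, he, hes⟩ := Finset.exists_mem_notMem_of_card_lt_card
    (hs.trans_eq (Complex.isPrimitiveRoot_exp r hr.ne').card_nthRootsFinset.symm)
  exact ⟨e, (Polynomial.mem_nthRootsFinset hr 1).1 he, hes⟩

theorem exists_eq_of_functional {α β : Type*} [Zero β] (R : α → β → Prop)
    (hR : ∀ a b c, R a b → R a c → b = c) :
    ∃ f : α → β, ∀ a, (∀ b, R a b → f a = b) ∧ ((∀ b, ¬ R a b) → f a = 0) := by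
  classical
  refine ⟨fun a => if h : ∃ b, R a b then h.choose else 0, fun a => ⟨fun b hb => ?_, fun h => ?_⟩⟩
  · have h : ∃ b, R a b := ⟨b, hb⟩
    simp only [h, dif_pos]
    exact hR a _ _ h.choose_spec hb
  · simp [not_exists.2 h]

section Coordinates

variable {ℓ : ℕ} {X : Submodule ℂ (Fin ℓ → ℂ)} {i j m : Fin ℓ} {ζ η : ℂ}

@[simp]
theorem mem_coordH {x : Fin ℓ → ℂ} : x ∈ coordH ℓ i ↔ x i = 0 := by
  simp [coordH]

@[simp]
theorem mem_diffH {x : Fin ℓ → ℂ} : x ∈ diffH ℓ i j ζ ↔ x i = ζ * x j := by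
  simp [diffH, sub_eq_zero]

theorem diffH_symm (hζ : ζ ≠ 0) : diffH ℓ i j ζ = diffH ℓ j i ζ⁻¹ := by
  ext x
  simp only [mem_diffH]
  constructor <;> intro h <;> rw [h] <;> field_simp

theorem le_diffH_trans (h₁ : X ≤ diffH ℓ i j ζ) (h₂ : X ≤ diffH ℓ j m η) :
    X ≤ diffH ℓ i m (ζ * η) := fun x hx => by
  rw [mem_diffH, mem_diffH.1 (h₁ hx), mem_diffH.1 (h₂ hx), mul_assoc]

theorem le_coordH_left_of_le_diffH (h : X ≤ diffH ℓ i j ζ) (hj : X ≤ coordH ℓ j) :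
    X ≤ coordH ℓ i := fun x hx => by
  rw [mem_coordH, mem_diffH.1 (h hx), mem_coordH.1 (hj hx), mul_zero]

theorem le_coordH_right_of_le_diffH (hζ : ζ ≠ 0) (h : X ≤ diffH ℓ i j ζ)
    (hi : X ≤ coordH ℓ i) : X ≤ coordH ℓ j :=
  le_coordH_left_of_le_diffH (diffH_symm hζ ▸ h) hi

theorem ne_zero_of_le_diffH (h : X ≤ diffH ℓ i j ζ) (hi : ¬ X ≤ coordH ℓ i) : ζ ≠ 0 := by
  rintro rfl
  exact hi fun x hx => by simpa using h hx

theorem diffH_self (hζ : ζ ≠ 1) : diffH ℓ i i ζ = coordH ℓ i := by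
  ext x
  simp only [mem_diffH, mem_coordH]
  constructor
  · intro h
    have : (1 - ζ) * x i = 0 := by linear_combination h
    exact (mul_eq_zero.1 this).resolve_left (sub_ne_zero.2 hζ.symm)
  · intro h
    rw [h, mul_zero]

theorem coordH_inf_le_diffH : coordH ℓ i ⊓ coordH ℓ j ≤ diffH ℓ i j ζ := by
  rintro x ⟨hi, hj⟩
  simp_all

theorem eq_of_le_diffH (h₁ : X ≤ diffH ℓ i j ζ) (h₂ : X ≤ diffH ℓ i j η)
    (hj : ¬ X ≤ coordH ℓ j) : ζ = η := by
  obtain ⟨x, hx, hxj⟩ := SetLike.not_le_iff_exists.1 hj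
  exact mul_right_cancel₀ (mt mem_coordH.2 hxj)
    ((mem_diffH.1 (h₁ hx)).symm.trans (mem_diffH.1 (h₂ hx)))

theorem inf_diffH_le_coordH {ω : ℂ} (hω : ω ≠ 1) :
    diffH ℓ i j 1 ⊓ diffH ℓ i j ω ≤ coordH ℓ i ⊓ coordH ℓ j := by
  rintro x ⟨h₁, h₂⟩
  simp only [SetLike.mem_coe, mem_diffH, one_mul] at h₁ h₂
  have hj : x j = 0 := by
    have : (ω - 1) * x j = 0 := by linear_combination h₁ - h₂
    exact (mul_eq_zero.1 this).resolve_left (sub_ne_zero.2 hω)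
  exact ⟨mem_coordH.2 (h₁.trans hj), mem_coordH.2 hj⟩

theorem single_mem_coordH (h : m ≠ i) : Pi.single m (1 : ℂ) ∈ coordH ℓ i := by
  simp [h.symm]

theorem single_mem_diffH (hi : m ≠ i) (hj : m ≠ j) : Pi.single m (1 : ℂ) ∈ diffH ℓ i j ζ := by
  simp [hi.symm, hj.symm]

theorem isCoatom_coordH : IsCoatom (coordH ℓ i) :=
  LinearMap.isCoatom_ker_of_surjective fun c => ⟨Pi.single i c, by simp⟩

theorem isCoatom_diffH (hij : i ≠ j) : IsCoatom (diffH ℓ i j ζ) :=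
  LinearMap.isCoatom_ker_of_surjective fun c => ⟨Pi.single i c, by simp [hij.symm]⟩

end Coordinates

section InterArr

variable {r ℓ k : ℕ} {i j : Fin ℓ} {ζ : ℂ}

theorem coordH_mem_interArr (hi : (i : ℕ) < k) : coordH ℓ i ∈ interArr r ℓ k :=
  Or.inl ⟨i, hi, rfl⟩

theorem diffH_mem_interArr (hr : r ≠ 0) (hij : i ≠ j) (hζ : ζ ^ r = 1) :
    diffH ℓ i j ζ ∈ interArr r ℓ k := by
  rcases hij.lt_or_gt with h | h
  · exact Or.inr ⟨i, j, h, ζ, hζ, rfl⟩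
  · exact Or.inr ⟨j, i, h, ζ⁻¹, by rw [inv_pow, hζ, inv_one],
      diffH_symm (ne_zero_of_pow_eq_one hr hζ)⟩

theorem diffH_mem_arrLatIn (hr : r ≠ 0) (hij : i ≠ j) (hζ : ζ ^ r = 1) :
    diffH ℓ i j ζ ∈ ArrLatIn ⊤ (interArr r ℓ k) :=
  mem_arrLatIn_of_mem (diffH_mem_interArr hr hij hζ)

theorem isCoatom_of_mem_interArr {H : Submodule ℂ (Fin ℓ → ℂ)} (hH : H ∈ interArr r ℓ k) :
    IsCoatom H := by
  obtain ⟨i, -, rfl⟩ | ⟨i, j, hij, ζ, -, rfl⟩ := hH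
  · exact isCoatom_coordH
  · exact isCoatom_diffH hij.ne

theorem bot_mem_arrLatIn_interArr (hr : 2 ≤ r) (hℓ : 2 ≤ ℓ) :
    ⊥ ∈ ArrLatIn ⊤ (interArr r ℓ k) := by
  obtain ⟨ω, hω, hω1⟩ := exists_pow_eq_one_notMem (r := r) {1} (by simp; omega)
  have : Nontrivial (Fin ℓ) := Fin.nontrivial_iff_two_le.2 hℓ
  refine ⟨interArr r ℓ k, subset_rfl, (eq_bot_iff.2 fun v hv => ?_).symm⟩
  rw [top_inf_eq, mem_sInf] at hv
  ext s
  obtain ⟨t, hts⟩ := exists_ne s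
  have hvst : v ∈ diffH ℓ s t 1 ⊓ diffH ℓ s t ω :=
    ⟨hv _ (diffH_mem_interArr (by omega) hts.symm (one_pow r)),
      hv _ (diffH_mem_interArr (by omega) hts.symm hω)⟩
  exact mem_coordH.1 (inf_diffH_le_coordH (by simpa using hω1) hvst).1

end InterArr

section Separation

variable {r ℓ k : ℕ} {X Y : Submodule ℂ (Fin ℓ → ℂ)} {p q : Fin ℓ} {v : Fin ℓ → ℂ}

def NoCommonDiffH (r : ℕ) (X Y : Submodule ℂ (Fin ℓ → ℂ)) (p q : Fin ℓ) : Prop :=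
  ∀ ν : ℂ, ν ^ r = 1 → X ≤ diffH ℓ p q ν → ¬ Y ≤ diffH ℓ p q ν

theorem NoCommonDiffH.symm (hr : r ≠ 0) (h : NoCommonDiffH r X Y p q) :
    NoCommonDiffH r X Y q p := by
  intro ν hν hX hY
  rw [diffH_symm (ne_zero_of_pow_eq_one hr hν)] at hX hY
  exact h ν⁻¹ (by rw [inv_pow, hν, inv_one]) hX hY

theorem noCommonDiffH_of_mem {ρ : ℂ} (hv : v ∈ Y) (hvpq : v p = ρ * v q) (hvq : v q ≠ 0)
    (hX : ¬ X ≤ diffH ℓ p q ρ) : NoCommonDiffH r X Y p q := by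
  intro ν _ hXν hYν
  rw [mul_right_cancel₀ hvq (hvpq.symm.trans (mem_diffH.1 (hYν hv)))] at hX
  exact hX hXν

theorem noCommonDiffH_of_mem_of_eq_zero (hv : v ∈ Y) (hvp : v p ≠ 0) (hvq : v q = 0) :
    NoCommonDiffH r X Y p q := fun ν _ _ hYν =>
  hvp (by rw [mem_diffH.1 (hYν hv), hvq, mul_zero])

theorem noCommonDiffH_of_le_coordH (hq : X ≤ coordH ℓ q) (hp : ¬ X ≤ coordH ℓ p) :
    NoCommonDiffH r X Y p q := fun _ _ hXν _ =>
  hp (le_coordH_left_of_le_diffH hXν hq)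

theorem pairwise_noCommonDiffH_triple (hr : r ≠ 0) {a b c : Fin ℓ}
    (hab : NoCommonDiffH r X Y a b) (hac : NoCommonDiffH r X Y a c)
    (hbc : NoCommonDiffH r X Y b c) : ({a, b, c} : Set (Fin ℓ)).Pairwise (NoCommonDiffH r X Y) := by
  have : Std.Symm (NoCommonDiffH r X Y) := ⟨fun _ _ h => h.symm hr⟩
  simp [Set.pairwise_insert_of_symm, hab, hac, hbc]

theorem pairwise_noCommonDiffH_quadruple (hr : r ≠ 0) {a b c d : Fin ℓ}
    (hab : NoCommonDiffH r X Y a b) (hac : NoCommonDiffH r X Y a c)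
    (had : NoCommonDiffH r X Y a d) (hbc : NoCommonDiffH r X Y b c)
    (hbd : NoCommonDiffH r X Y b d) (hcd : NoCommonDiffH r X Y c d) :
    ({a, b, c, d} : Set (Fin ℓ)).Pairwise (NoCommonDiffH r X Y) := by
  have : Std.Symm (NoCommonDiffH r X Y) := ⟨fun _ _ h => h.symm hr⟩
  simp [Set.pairwise_insert_of_symm, hab, hac, had, hbc, hbd, hcd]

/-- Hyperplanes of `A^k_ℓ(r)` containing `Y` only involve coordinates in `S` when `Y` contains
every standard basis vector outside `S`. -/
theorem forall_not_le_of_pairwise (hr : r ≠ 0) (S : Set (Fin ℓ))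
    (hS : ∀ w ∉ S, Pi.single w (1 : ℂ) ∈ Y)
    (hcoord : ∀ t ∈ S, (t : ℕ) < k → X ≤ coordH ℓ t → ¬ Y ≤ coordH ℓ t)
    (hdiff : S.Pairwise (NoCommonDiffH r X Y)) :
    ∀ H ∈ interArr r ℓ k, X ≤ H → ¬ Y ≤ H := by
  rintro H (⟨t, ht, rfl⟩ | ⟨p, q, hpq, ν, hν, rfl⟩) hXH hYH
  · by_cases htS : t ∈ S
    · exact hcoord t htS ht hXH hYH
    · simpa using hYH (hS t htS)
  · have hp : p ∈ S := by
      by_contra hpS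
      simpa [hpq.ne'] using hYH (hS p hpS)
    have hq : q ∈ S := by
      by_contra hqS
      simpa [hpq.ne, eq_comm, ne_zero_of_pow_eq_one hr hν] using hYH (hS q hqS)
    exact hdiff hp hq hpq.ne ν hν hXH hYH

end Separation

section Linked

variable {r ℓ : ℕ} {X : Submodule ℂ (Fin ℓ → ℂ)} {p q s : Fin ℓ}

def Linked (r : ℕ) (X : Submodule ℂ (Fin ℓ → ℂ)) (p q : Fin ℓ) : Prop :=
  ∃ ν : ℂ, ν ^ r = 1 ∧ X ≤ diffH ℓ p q ν

theorem Linked.symm (hr : r ≠ 0) : Linked r X p q → Linked r X q p := by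
  rintro ⟨ν, hν, hX⟩
  exact ⟨ν⁻¹, by rw [inv_pow, hν, inv_one], diffH_symm (ne_zero_of_pow_eq_one hr hν) ▸ hX⟩

theorem Linked.trans : Linked r X p q → Linked r X q s → Linked r X p s := by
  rintro ⟨ν, hν, hX⟩ ⟨μ, hμ, hX'⟩
  exact ⟨ν * μ, by rw [mul_pow, hν, hμ, one_mul], le_diffH_trans hX hX'⟩

theorem exists_pow_eq_one_not_le_diffH (hr : 2 ≤ r) (hq : ¬ X ≤ coordH ℓ q) :
    ∃ e : ℂ, e ^ r = 1 ∧ ¬ X ≤ diffH ℓ p q e := by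
  by_cases h : ∃ ρ, X ≤ diffH ℓ p q ρ
  · obtain ⟨ρ, hρ⟩ := h
    obtain ⟨e, he, heρ⟩ := exists_pow_eq_one_notMem (r := r) {ρ} (by simp; omega)
    exact ⟨e, he, fun hle => heρ (by simp [eq_of_le_diffH hle hρ hq])⟩
  · exact ⟨1, one_pow r, fun hle => h ⟨1, hle⟩⟩

end Linked

section NonModular

variable {r ℓ k : ℕ} {X : Submodule ℂ (Fin ℓ → ℂ)}

theorem not_modularIn_of_le_coordH_of_not_le_coordH (hr : 2 ≤ r) {j m : Fin ℓ}
    (hjk : k ≤ (j : ℕ)) (hXj : X ≤ coordH ℓ j) (hXm : ¬ X ≤ coordH ℓ m) :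
    ¬ ModularIn (ArrLatIn ⊤ (interArr r ℓ k)) X := by
  have hr0 : r ≠ 0 := by omega
  obtain ⟨ω, hω, hω1⟩ := exists_pow_eq_one_notMem (r := r) {1} (by simp; omega)
  have hjm : j ≠ m := fun h => hXm (h ▸ hXj)
  set Y := diffH ℓ j m 1 ⊓ diffH ℓ j m ω
  have hYj : Y ≤ coordH ℓ j := (inf_diffH_le_coordH (by simpa using hω1)).trans inf_le_left
  have hsep : NoCommonDiffH r X Y m j := noCommonDiffH_of_le_coordH hXj hXm
  refine not_modularIn_of_sup_ne_top
    (inf_mem_arrLatIn (diffH_mem_arrLatIn hr0 hjm (one_pow r)) (diffH_mem_arrLatIn hr0 hjm hω))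
    (ne_top_of_le_ne_top isCoatom_coordH.1 (sup_le hXj hYj))
    (forall_not_le_of_pairwise hr0 {j, m} (fun w hw => ?_) ?_
      (Set.pairwise_pair.2 fun _ => ⟨hsep.symm hr0, hsep⟩))
  · simp only [Set.mem_insert_iff, Set.mem_singleton_iff, not_or] at hw
    exact ⟨single_mem_diffH hw.1 hw.2, single_mem_diffH hw.1 hw.2⟩
  · rintro t (rfl | rfl) htk hXt
    · omega
    · exact absurd hXt hXm

theorem not_modularIn_of_linked_of_le_coordH (hr : 2 ≤ r) {i j t : Fin ℓ} (hij : i ≠ j)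
    (hXij : Linked r X i j) (hXi : ¬ X ≤ coordH ℓ i) (hXt : X ≤ coordH ℓ t) :
    ¬ ModularIn (ArrLatIn ⊤ (interArr r ℓ k)) X := by
  obtain ⟨ζ, -, hXζ⟩ := hXij
  have hr0 : r ≠ 0 := by omega
  have hXj : ¬ X ≤ coordH ℓ j := fun h => hXi (le_coordH_left_of_le_diffH hXζ h)
  have hti : t ≠ i := fun h => hXi (h ▸ hXt)
  have htj : t ≠ j := fun h => hXj (h ▸ hXt)
  obtain ⟨c, hc, hXc⟩ := exists_pow_eq_one_not_le_diffH (p := i) hr hXj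
  have hc0 : c ≠ 0 := ne_zero_of_pow_eq_one hr0 hc
  set Y := diffH ℓ i j c ⊓ diffH ℓ i t 1
  set v : Fin ℓ → ℂ := Pi.single i c + Pi.single j 1 + Pi.single t c
  have hv : v ∈ Y := by simp [Y, v, hij, hti, htj, hij.symm, hti.symm]
  refine not_modularIn_of_sup_ne_top
    (inf_mem_arrLatIn (diffH_mem_arrLatIn hr0 hij hc)
      (diffH_mem_arrLatIn hr0 hti.symm (one_pow r)))
    (sup_ne_top_of_le_ker (f := c • LinearMap.proj i - (ζ * c) • LinearMap.proj j +
      (ζ - c) • LinearMap.proj t) (v := Pi.single j 1)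
      (by simp [hij, htj.symm, ne_zero_of_le_diffH hXζ hXi, hc0]) (fun x hx => ?_)
      (fun x hx => ?_))
    (forall_not_le_of_pairwise hr0 {i, j, t} (fun w hw => ?_) ?_
      (pairwise_noCommonDiffH_triple hr0
        (noCommonDiffH_of_mem hv (by simp [v, hij, hti, htj]) (by simp [v, hij.symm, htj])
          hXc)
        (noCommonDiffH_of_le_coordH hXt hXi) (noCommonDiffH_of_le_coordH hXt hXj)))
  · show c * x i - ζ * c * x j + (ζ - c) * x t = 0
    linear_combination c * mem_diffH.1 (hXζ hx) + (ζ - c) * mem_coordH.1 (hXt hx)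
  · show c * x i - ζ * c * x j + (ζ - c) * x t = 0
    linear_combination ζ * mem_diffH.1 hx.1 + (c - ζ) * mem_diffH.1 hx.2
  · simp only [Set.mem_insert_iff, Set.mem_singleton_iff, not_or] at hw
    exact ⟨single_mem_diffH hw.1 hw.2.1, single_mem_diffH hw.1 hw.2.2⟩
  · rintro s (rfl | rfl | rfl) - hXs
    · exact absurd hXs hXi
    · exact absurd hXs hXj
    · exact fun hYs => hc0 (by simpa [v, hti, htj] using hYs hv)

theorem not_modularIn_of_linked_of_linked_disjoint (hr : 2 ≤ r) {i j a b : Fin ℓ} (hij : i ≠ j)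
    (hab : a ≠ b) (hai : a ≠ i) (haj : a ≠ j) (hbi : b ≠ i) (hbj : b ≠ j)
    (hXij : Linked r X i j) (hXab : Linked r X a b) (hXb : ¬ X ≤ coordH ℓ b) :
    ¬ ModularIn (ArrLatIn ⊤ (interArr r ℓ k)) X := by
  obtain ⟨ζ, hζ, hXζ⟩ := hXij
  obtain ⟨μ, hμ, hXμ⟩ := hXab
  have hr0 : r ≠ 0 := by omega
  obtain ⟨e, he, hXe⟩ := exists_pow_eq_one_not_le_diffH (p := i) hr hXb
  set c := e * μ⁻¹
  set d := e * ζ⁻¹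
  have hcμ : c * μ = e := by simp [c, ne_zero_of_pow_eq_one hr0 hμ]
  have hζd : ζ * d = e := by simp [d, ne_zero_of_pow_eq_one hr0 hζ, mul_comm ζ]
  have hc0 : c ≠ 0 := by simp [c, ne_zero_of_pow_eq_one hr0 he, ne_zero_of_pow_eq_one hr0 hμ]
  have hd0 : d ≠ 0 := by simp [d, ne_zero_of_pow_eq_one hr0 he, ne_zero_of_pow_eq_one hr0 hζ]
  set Y := diffH ℓ i a c ⊓ diffH ℓ j b d
  set v₁ : Fin ℓ → ℂ := Pi.single i c + Pi.single a 1
  set v₂ : Fin ℓ → ℂ := Pi.single j d + Pi.single b 1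
  have hv₁ : v₁ ∈ Y := by simp [Y, v₁, hai, hbi, haj, hab, hai.symm, hij.symm]
  have hv₂ : v₂ ∈ Y := by simp [Y, v₂, hbj, hbi, haj, hab.symm, hij, hbj.symm]
  refine not_modularIn_of_sup_ne_top
    (inf_mem_arrLatIn (diffH_mem_arrLatIn hr0 hai.symm (by simp [c, mul_pow, he, hμ]))
      (diffH_mem_arrLatIn hr0 hbj.symm (by simp [d, mul_pow, he, hζ])))
    (sup_ne_top_of_le_ker (f := LinearMap.proj i - ζ • LinearMap.proj j -
      c • LinearMap.proj a + e • LinearMap.proj b) (v := Pi.single i 1)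
      (by simp [hij.symm, hai, hbi]) (fun x hx => ?_) (fun x hx => ?_))
    (forall_not_le_of_pairwise hr0 {i, j, a, b} (fun w hw => ?_) ?_
      (pairwise_noCommonDiffH_quadruple hr0
        (noCommonDiffH_of_mem_of_eq_zero hv₁ (by simp [v₁, hai.symm, hc0])
          (by simp [v₁, hij.symm, haj.symm]))
        (noCommonDiffH_of_mem hv₁ (by simp [v₁, hai, hai.symm]) (by simp [v₁, hai])
          fun h => hXe (hcμ ▸ le_diffH_trans h hXμ))
        (noCommonDiffH_of_mem_of_eq_zero hv₁ (by simp [v₁, hai.symm, hc0])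
          (by simp [v₁, hbi, hab.symm]))
        (noCommonDiffH_of_mem_of_eq_zero hv₂ (by simp [v₂, hbj.symm, hd0]) (by simp [v₂, haj, hab]))
        (noCommonDiffH_of_mem hv₂ (by simp [v₂, hbj, hbj.symm]) (by simp [v₂, hbj])
          fun h => hXe (hζd ▸ le_diffH_trans hXζ h))
        (noCommonDiffH_of_mem_of_eq_zero hv₁ (by simp [v₁, hai]) (by simp [v₁, hbi, hab.symm]))))
  · show x i - ζ * x j - c * x a + e * x b = 0
    linear_combination mem_diffH.1 (hXζ hx) - c * mem_diffH.1 (hXμ hx) - x b * hcμ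
  · show x i - ζ * x j - c * x a + e * x b = 0
    linear_combination mem_diffH.1 hx.1 - ζ * mem_diffH.1 hx.2 - x b * hζd
  · simp only [Set.mem_insert_iff, Set.mem_singleton_iff, not_or] at hw
    exact ⟨single_mem_diffH hw.1 hw.2.2.1, single_mem_diffH hw.2.1 hw.2.2.2⟩
  · rintro s (rfl | rfl | rfl | rfl) - - hYs
    · exact hc0 (by simpa [v₁, hai] using hYs hv₁)
    · exact hd0 (by simpa [v₂, hbj] using hYs hv₂)
    · simpa [v₁, hai] using hYs hv₁
    · simpa [v₂, hbj] using hYs hv₂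

theorem not_modularIn_of_linked_of_linked_of_not_linked (hr : 2 ≤ r) {i j m u : Fin ℓ}
    (hij : i ≠ j) (hmi : m ≠ i) (hmj : m ≠ j) (hui : u ≠ i) (huj : u ≠ j) (hum : u ≠ m)
    (hXij : Linked r X i j) (hXim : Linked r X i m) (hXmu : ¬ Linked r X m u)
    (hXi : ¬ X ≤ coordH ℓ i) (hXu : ¬ X ≤ coordH ℓ u) :
    ¬ ModularIn (ArrLatIn ⊤ (interArr r ℓ k)) X := by
  obtain ⟨ζ, -, hXζ⟩ := hXij
  obtain ⟨θ, -, hXθ⟩ := hXim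
  have hr0 : r ≠ 0 := by omega
  have hXj : ¬ X ≤ coordH ℓ j := fun h => hXi (le_coordH_left_of_le_diffH hXζ h)
  have hXm : ¬ X ≤ coordH ℓ m := fun h => hXi (le_coordH_left_of_le_diffH hXθ h)
  obtain ⟨c, hc, hXc⟩ := exists_pow_eq_one_not_le_diffH (p := i) hr hXj
  obtain ⟨ω, hω, hω1⟩ := exists_pow_eq_one_notMem (r := r) {1} (by simp; omega)
  have hc0 : c ≠ 0 := ne_zero_of_pow_eq_one hr0 hc
  set Y := diffH ℓ i j c ⊓ (diffH ℓ m u 1 ⊓ diffH ℓ m u ω)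
  have hYmu : Y ≤ coordH ℓ m ⊓ coordH ℓ u :=
    inf_le_right.trans (inf_diffH_le_coordH (by simpa using hω1))
  set v : Fin ℓ → ℂ := Pi.single i c + Pi.single j 1
  have hv : v ∈ Y := by simp [Y, v, hij, hmi.symm, hmj.symm, hui.symm, huj.symm, hij.symm]
  refine not_modularIn_of_sup_ne_top
    (inf_mem_arrLatIn (diffH_mem_arrLatIn hr0 hij hc) (inf_mem_arrLatIn
      (diffH_mem_arrLatIn hr0 hum.symm (one_pow r)) (diffH_mem_arrLatIn hr0 hum.symm hω)))
    (sup_ne_top_of_le_ker (f := ζ • LinearMap.proj i - (ζ * c) • LinearMap.proj j +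
      (θ * (c - ζ)) • LinearMap.proj m) (v := Pi.single i 1)
      (by simp [hij.symm, hmi.symm, ne_zero_of_le_diffH hXζ hXi]) (fun x hx => ?_)
      (fun x hx => ?_))
    (forall_not_le_of_pairwise hr0 {i, j, m, u} (fun w hw => ?_) ?_
      (pairwise_noCommonDiffH_quadruple hr0
        (noCommonDiffH_of_mem hv (by simp [v, hij, hij.symm]) (by simp [v, hij.symm]) hXc)
        (noCommonDiffH_of_mem_of_eq_zero hv (by simp [v, hij, hc0]) (by simp [v, hmi, hmj]))
        (noCommonDiffH_of_mem_of_eq_zero hv (by simp [v, hij, hc0]) (by simp [v, hui, huj]))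
        (noCommonDiffH_of_mem_of_eq_zero hv (by simp [v, hij.symm]) (by simp [v, hmi, hmj]))
        (noCommonDiffH_of_mem_of_eq_zero hv (by simp [v, hij.symm]) (by simp [v, hui, huj]))
        fun ν hν hXν _ => hXmu ⟨ν, hν, hXν⟩))
  · show ζ * x i - ζ * c * x j + θ * (c - ζ) * x m = 0
    linear_combination c * mem_diffH.1 (hXζ hx) + (ζ - c) * mem_diffH.1 (hXθ hx)
  · show ζ * x i - ζ * c * x j + θ * (c - ζ) * x m = 0
    linear_combination ζ * mem_diffH.1 hx.1 + θ * (c - ζ) * mem_coordH.1 (hYmu hx).1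
  · simp only [Set.mem_insert_iff, Set.mem_singleton_iff, not_or] at hw
    exact ⟨single_mem_diffH hw.1 hw.2.1, single_mem_diffH hw.2.2.1 hw.2.2.2,
      single_mem_diffH hw.2.2.1 hw.2.2.2⟩
  · rintro s (rfl | rfl | rfl | rfl) - hXs hYs
    · exact hc0 (by simpa [v, hij] using hYs hv)
    · simpa [v, hij.symm] using hYs hv
    · exact hXm hXs
    · exact hXu hXs

theorem not_modularIn_of_linked_of_linked_of_lt (hr : 2 ≤ r) {t u₁ u₂ : Fin ℓ}
    (htk : (t : ℕ) < k) (hu₁t : u₁ ≠ t) (hu₂t : u₂ ≠ t) (hu₁₂ : u₁ ≠ u₂)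
    (hXtu₁ : Linked r X t u₁) (hXtu₂ : Linked r X t u₂) (hXt : ¬ X ≤ coordH ℓ t) :
    ¬ ModularIn (ArrLatIn ⊤ (interArr r ℓ k)) X := by
  obtain ⟨τ, -, hXτ⟩ := hXtu₁
  obtain ⟨σ, -, hXσ⟩ := hXtu₂
  have hr0 : r ≠ 0 := by omega
  have hXu₂ : ¬ X ≤ coordH ℓ u₂ := fun h => hXt (le_coordH_left_of_le_diffH hXσ h)
  obtain ⟨w, hw, hXw⟩ := exists_pow_eq_one_not_le_diffH (p := u₁) hr hXu₂
  have hw0 : w ≠ 0 := ne_zero_of_pow_eq_one hr0 hw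
  set Y := coordH ℓ t ⊓ diffH ℓ u₁ u₂ w
  set v : Fin ℓ → ℂ := Pi.single u₁ w + Pi.single u₂ 1
  have hv : v ∈ Y := by simp [Y, v, hu₁t.symm, hu₂t.symm, hu₁₂, hu₁₂.symm]
  refine not_modularIn_of_sup_ne_top
    (inf_mem_arrLatIn (mem_arrLatIn_of_mem (coordH_mem_interArr htk))
      (diffH_mem_arrLatIn hr0 hu₁₂ hw))
    (sup_ne_top_of_le_ker (f := (σ - w * τ) • LinearMap.proj t -
      (τ * σ) • LinearMap.proj u₁ + (τ * σ * w) • LinearMap.proj u₂) (v := Pi.single u₁ 1)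
      (by simp [hu₁t, hu₁₂.symm, ne_zero_of_le_diffH hXτ hXt, ne_zero_of_le_diffH hXσ hXt])
      (fun x hx => ?_) (fun x hx => ?_))
    (forall_not_le_of_pairwise hr0 {t, u₁, u₂} (fun s hs => ?_) ?_
      (pairwise_noCommonDiffH_triple hr0
        ((noCommonDiffH_of_mem_of_eq_zero hv (by simp [v, hu₁₂, hw0])
          (by simp [v, hu₁t.symm, hu₂t.symm])).symm hr0)
        ((noCommonDiffH_of_mem_of_eq_zero hv (by simp [v, hu₁₂.symm])
          (by simp [v, hu₁t.symm, hu₂t.symm])).symm hr0)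
        (noCommonDiffH_of_mem hv (by simp [v, hu₁₂, hu₁₂.symm]) (by simp [v, hu₁₂.symm]) hXw)))
  · show (σ - w * τ) * x t - τ * σ * x u₁ + τ * σ * w * x u₂ = 0
    linear_combination σ * mem_diffH.1 (hXτ hx) - τ * w * mem_diffH.1 (hXσ hx)
  · show (σ - w * τ) * x t - τ * σ * x u₁ + τ * σ * w * x u₂ = 0
    linear_combination (σ - w * τ) * mem_coordH.1 hx.1 - τ * σ * mem_diffH.1 hx.2
  · simp only [Set.mem_insert_iff, Set.mem_singleton_iff, not_or] at hs
    exact ⟨single_mem_coordH hs.1, single_mem_diffH hs.2.1 hs.2.2⟩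
  · rintro s (rfl | rfl | rfl) - hXs hYs
    · exact hXt hXs
    · exact hw0 (by simpa [v, hu₁₂] using hYs hv)
    · simpa [v, hu₁₂.symm] using hYs hv

theorem not_modularIn_of_linked_of_linked_of_three_le (hr : 3 ≤ r) {i j m : Fin ℓ}
    (hij : i ≠ j) (hmi : m ≠ i) (hmj : m ≠ j) (hXij : Linked r X i j) (hXim : Linked r X i m)
    (hXi : ¬ X ≤ coordH ℓ i) :
    ¬ ModularIn (ArrLatIn ⊤ (interArr r ℓ k)) X := by
  obtain ⟨ζ, -, hXζ⟩ := hXij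
  obtain ⟨θ, -, hXθ⟩ := hXim
  have hr0 : r ≠ 0 := by omega
  have hXj : ¬ X ≤ coordH ℓ j := fun h => hXi (le_coordH_left_of_le_diffH hXζ h)
  have hXm : ¬ X ≤ coordH ℓ m := fun h => hXi (le_coordH_left_of_le_diffH hXθ h)
  have hXjm : X ≤ diffH ℓ j m (ζ⁻¹ * θ) :=
    le_diffH_trans (diffH_symm (ne_zero_of_le_diffH hXζ hXi) ▸ hXζ) hXθ
  -- The ratios `a`, `b`, `b / a` of `v` on `(i, j)`, `(i, m)`, `(j, m)` must avoid those of `X`: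
  -- one forbidden value for `a` and two for `b`, hence `r ≥ 3`.
  obtain ⟨a, ha, haζ⟩ := exists_pow_eq_one_notMem (r := r) {ζ} (by simp; omega)
  obtain ⟨b, hb, hbθ⟩ := exists_pow_eq_one_notMem (r := r) {θ, a * ζ⁻¹ * θ}
    ((Finset.card_le_two).trans_lt (by omega))
  have ha0 : a ≠ 0 := ne_zero_of_pow_eq_one hr0 ha
  have hb0 : b ≠ 0 := ne_zero_of_pow_eq_one hr0 hb
  simp only [Finset.mem_singleton, Finset.mem_insert, not_or] at haζ hbθ
  set Y := diffH ℓ i j a ⊓ diffH ℓ i m b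
  set v : Fin ℓ → ℂ := Pi.single i (a * b) + Pi.single j b + Pi.single m a
  have hv : v ∈ Y := by
    simp [Y, v, hij, hmi.symm, hmj.symm, hij.symm, hmi, hmj, mul_comm a b]
  -- On `{i, j, m}` the coefficients of `f` are the cross product of `v` with `(ζ θ, θ, ζ)`,
  -- which spans `X` there.
  refine not_modularIn_of_sup_ne_top
    (inf_mem_arrLatIn (diffH_mem_arrLatIn hr0 hij ha) (diffH_mem_arrLatIn hr0 hmi.symm hb))
    (sup_ne_top_of_le_ker (f := (b * ζ - a * θ) • LinearMap.proj i +
      (a * ζ * (θ - b)) • LinearMap.proj j + (b * θ * (a - ζ)) • LinearMap.proj m)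
      (v := Pi.single m 1)
      (by simp [hmi, hmj, hb0, ne_zero_of_le_diffH hXθ hXi, sub_ne_zero.2 haζ])
      (fun x hx => ?_) (fun x hx => ?_))
    (forall_not_le_of_pairwise hr0 {i, j, m} (fun w hw => ?_) ?_
      (pairwise_noCommonDiffH_triple hr0
        (noCommonDiffH_of_mem hv (by simp [v, hij, hmi.symm, hij.symm, hmj.symm])
          (by simp [v, hij.symm, hmj.symm, hb0])
          fun h => haζ (eq_of_le_diffH h hXζ hXj))
        (noCommonDiffH_of_mem hv (by simp [v, hij, hmi.symm, hmi, hmj, mul_comm a b])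
          (by simp [v, hmi, hmj, ha0])
          fun h => hbθ.1 (eq_of_le_diffH h hXθ hXm))
        (noCommonDiffH_of_mem hv (ρ := b * a⁻¹)
          (by simp [v, hij.symm, hmj.symm, hmi, hmj, ha0])
          (by simp [v, hmi, hmj, ha0])
          fun h => hbθ.2 (by
            have := eq_of_le_diffH h hXjm hXm
            field_simp at this ⊢
            linear_combination this))))
  · show (b * ζ - a * θ) * x i + a * ζ * (θ - b) * x j + b * θ * (a - ζ) * x m = 0
    linear_combination a * (b - θ) * mem_diffH.1 (hXζ hx) + b * (ζ - a) * mem_diffH.1 (hXθ hx)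
  · show (b * ζ - a * θ) * x i + a * ζ * (θ - b) * x j + b * θ * (a - ζ) * x m = 0
    linear_combination ζ * (b - θ) * mem_diffH.1 hx.1 + θ * (ζ - a) * mem_diffH.1 hx.2
  · simp only [Set.mem_insert_iff, Set.mem_singleton_iff, not_or] at hw
    exact ⟨single_mem_diffH hw.1 hw.2.1, single_mem_diffH hw.1 hw.2.2⟩
  · rintro s (rfl | rfl | rfl) - - hYs
    · exact mul_ne_zero ha0 hb0 (by simpa [v, hij, hmi.symm] using hYs hv)
    · exact hb0 (by simpa [v, hij.symm, hmj.symm] using hYs hv)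
    · exact ha0 (by simpa [v, hmi, hmj] using hYs hv)

end NonModular

section Forward

variable {r ℓ k : ℕ} {X : Submodule ℂ (Fin ℓ → ℂ)}

theorem not_linked_of_modularIn_of_linked (hr : 2 ≤ r) (hℓ : 3 ≤ ℓ)
    (hexc : ¬(k = 0 ∧ ℓ = 3 ∧ r = 2)) (hmod : ModularIn (ArrLatIn ⊤ (interArr r ℓ k)) X)
    (hZ : ∀ s, ¬ X ≤ coordH ℓ s) {i j m : Fin ℓ} (hij : i ≠ j) (hmi : m ≠ i) (hmj : m ≠ j)
    (hXij : Linked r X i j)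
    (hdisj : ∀ a b, a ≠ b → a ≠ i → a ≠ j → b ≠ i → b ≠ j → ¬ Linked r X a b) :
    ¬ Linked r X i m := by
  intro hXim
  by_cases h4 : ∃ u, u ≠ i ∧ u ≠ j ∧ u ≠ m
  · obtain ⟨u, hui, huj, hum⟩ := h4
    exact not_modularIn_of_linked_of_linked_of_not_linked hr hij hmi hmj hui huj hum hXij hXim
      (hdisj m u hum.symm hmi hmj hui huj) (hZ i) (hZ u) hmod
  have hijm : ∀ u, u = i ∨ u = j ∨ u = m := fun u => by
    have := not_exists.1 h4 u
    tauto
  have hℓ3 : ℓ = 3 := by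
    have := (Finset.card_le_card (s := Finset.univ) fun u _ => by simpa using hijm u).trans
      (Finset.card_le_three (a := i) (b := j) (c := m))
    simp only [Finset.card_univ, Fintype.card_fin] at this
    omega
  have hr0 : r ≠ 0 := by omega
  rcases Nat.lt_or_ge 2 r with hr3 | hr2
  · exact not_modularIn_of_linked_of_linked_of_three_le hr3 hij hmi hmj hXij hXim (hZ i) hmod
  obtain ⟨t, htk⟩ : ∃ t : Fin ℓ, (t : ℕ) < k := ⟨⟨0, by omega⟩, by dsimp only; omega⟩
  rcases hijm t with rfl | rfl | rfl
  · exact not_modularIn_of_linked_of_linked_of_lt hr htk hij.symm hmi hmj.symm hXij hXim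
      (hZ _) hmod
  · exact not_modularIn_of_linked_of_linked_of_lt hr htk hij hmj hmi.symm (hXij.symm hr0)
      ((hXij.symm hr0).trans hXim) (hZ _) hmod
  · exact not_modularIn_of_linked_of_linked_of_lt hr htk hmi.symm hmj.symm hij (hXim.symm hr0)
      ((hXim.symm hr0).trans hXij) (hZ _) hmod

theorem mem_interArr_of_modularIn_of_linked (hr : 2 ≤ r) (hℓ : 3 ≤ ℓ)
    (hexc : ¬(k = 0 ∧ ℓ = 3 ∧ r = 2)) (hmod : ModularIn (ArrLatIn ⊤ (interArr r ℓ k)) X)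
    {i j : Fin ℓ} (hij : i ≠ j) (hXij : Linked r X i j) (hXi : ¬ X ≤ coordH ℓ i) :
    X ∈ interArr r ℓ k := by
  have hr0 : r ≠ 0 := by omega
  have hZ : ∀ t, ¬ X ≤ coordH ℓ t := fun t hXt =>
    not_modularIn_of_linked_of_le_coordH hr hij hXij hXi hXt hmod
  have hdisj : ∀ a b, a ≠ b → a ≠ i → a ≠ j → b ≠ i → b ≠ j → ¬ Linked r X a b :=
    fun a b hab hai haj hbi hbj hXab =>
      not_modularIn_of_linked_of_linked_disjoint hr hij hab hai haj hbi hbj hXij hXab (hZ b) hmod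
  have hthird : ∀ m, m ≠ i → m ≠ j → ¬ Linked r X i m := fun m hmi hmj =>
    not_linked_of_modularIn_of_linked hr hℓ hexc hmod hZ hij hmi hmj hXij hdisj
  have hpair : ∀ p q, p ≠ q → Linked r X p q → p = i ∧ q = j ∨ p = j ∧ q = i := by
    intro p q hpq hXpq
    by_cases hpi : p = i
    · subst hpi
      by_contra h
      exact hthird q hpq.symm (fun hqj => h (Or.inl ⟨rfl, hqj⟩)) hXpq
    by_cases hpj : p = j
    · subst hpj
      by_contra h
      exact hthird q (fun hqi => h (Or.inr ⟨rfl, hqi⟩)) hpq.symm (hXij.trans hXpq)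
    by_cases hqi : q = i
    · subst hqi
      exact absurd (hXpq.symm hr0) (hthird p hpi hpj)
    by_cases hqj : q = j
    · subst hqj
      exact absurd (hXij.trans (hXpq.symm hr0)) (hthird p hpi hpj)
    exact absurd hXpq (hdisj p q hpq hpi hpj hqi hqj)
  obtain ⟨ζ, hζ, hXζ⟩ := hXij
  suffices X = diffH ℓ i j ζ from this ▸ diffH_mem_interArr hr0 hij hζ
  refine eq_of_mem_arrLatIn hmod.1 hXζ fun H hH hXH => ?_
  obtain ⟨t, -, rfl⟩ | ⟨p, q, hpq, ν, hν, rfl⟩ := hH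
  · exact absurd hXH (hZ t)
  rcases hpair p q hpq.ne ⟨ν, hν, hXH⟩ with ⟨rfl, rfl⟩ | ⟨rfl, rfl⟩
  · rw [eq_of_le_diffH hXH hXζ (hZ _)]
  · rw [diffH_symm (ne_zero_of_pow_eq_one hr0 hν)] at hXH ⊢
    rw [eq_of_le_diffH hXH hXζ (hZ _)]

theorem mem_arrLatIn_boolArr_of_not_linked (hr : r ≠ 0) (hX : X ∈ ArrLatIn ⊤ (interArr r ℓ k))
    (hlink : ∀ p q, p ≠ q → Linked r X p q → X ≤ coordH ℓ p)
    (hzero : ∀ j, X ≤ coordH ℓ j → (j : ℕ) < k) : X ∈ ArrLatIn ⊤ (boolArr ℓ k) := by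
  set B := {H | H ∈ boolArr ℓ k ∧ X ≤ H}
  have hB : ∀ s, X ≤ coordH ℓ s → sInf B ≤ coordH ℓ s := fun s hs =>
    sInf_le ⟨⟨s, hzero s hs, rfl⟩, hs⟩
  refine ⟨B, fun H hH => hH.1, ?_⟩
  rw [top_inf_eq]
  refine le_antisymm (le_sInf fun H hH => hH.2) ?_
  calc sInf B ≤ sInf {H | H ∈ interArr r ℓ k ∧ X ≤ H} := le_sInf fun H ⟨hH, hXH⟩ => by
        obtain ⟨t, ht, rfl⟩ | ⟨p, q, hpq, ν, hν, rfl⟩ := hH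
        · exact sInf_le ⟨⟨t, ht, rfl⟩, hXH⟩
        · have hXp := hlink p q hpq.ne ⟨ν, hν, hXH⟩
          have hXq := le_coordH_right_of_le_diffH (ne_zero_of_pow_eq_one hr hν) hXH hXp
          exact (le_inf (hB p hXp) (hB q hXq)).trans coordH_inf_le_diffH
    _ = X := (eq_sInf_of_mem_arrLatIn hX).symm

theorem mem_or_eq_bot_of_modularIn (hr : 2 ≤ r) (hℓ : 3 ≤ ℓ)
    (hexc : ¬(k = 0 ∧ ℓ = 3 ∧ r = 2)) (hmod : ModularIn (ArrLatIn ⊤ (interArr r ℓ k)) X) :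
    X ∈ ArrLatIn ⊤ (boolArr ℓ k) ∨ X ∈ interArr r ℓ k ∨ X = ⊥ := by
  by_cases hlink : ∃ i j, i ≠ j ∧ Linked r X i j ∧ ¬ X ≤ coordH ℓ i
  · obtain ⟨i, j, hij, hXij, hXi⟩ := hlink
    exact Or.inr (Or.inl (mem_interArr_of_modularIn_of_linked hr hℓ hexc hmod hij hXij hXi))
  push Not at hlink
  by_cases hzero : ∀ j, X ≤ coordH ℓ j → (j : ℕ) < k
  · exact Or.inl (mem_arrLatIn_boolArr_of_not_linked (by omega) hmod.1 hlink hzero)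
  push Not at hzero
  obtain ⟨j, hXj, hjk⟩ := hzero
  by_cases hall : ∀ m, X ≤ coordH ℓ m
  · exact Or.inr (Or.inr (eq_bot_iff.2 fun x hx => funext fun m => mem_coordH.1 (hall m hx)))
  push Not at hall
  obtain ⟨m, hXm⟩ := hall
  exact absurd hmod (not_modularIn_of_le_coordH_of_not_le_coordH hr hjk hXj hXm)

end Forward

section Backward

variable {r ℓ k : ℕ} {X Y : Submodule ℂ (Fin ℓ → ℂ)}

theorem apply_eq_mul_of_le_diffH (hr : r ≠ 0) {T : Set (Fin ℓ)} (hTk : ∀ t ∈ T, (t : ℕ) < k)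
    (hXT : ∀ t ∈ T, X ≤ coordH ℓ t) {v : Fin ℓ → ℂ}
    (hv : ∀ H ∈ interArr r ℓ k, X ⊔ Y ≤ H → v ∈ H) {t₁ t₂ : Fin ℓ} (ht₁ : t₁ ∈ T)
    (ht₂ : t₂ ∈ T) {ρ : ℂ} (hρ : ρ ^ r = 1) (hY : Y ≤ diffH ℓ t₁ t₂ ρ) : v t₁ = ρ * v t₂ := by
  by_cases ht : t₁ = t₂
  · subst ht
    by_cases hρ1 : ρ = 1
    · rw [hρ1, one_mul]
    rw [diffH_self hρ1] at hY
    rw [mem_coordH.1 (hv _ (coordH_mem_interArr (hTk t₁ ht₁)) (sup_le (hXT t₁ ht₁) hY)),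
      mul_zero]
  · exact mem_diffH.1 (hv _ (diffH_mem_interArr hr ht hρ)
      (sup_le ((le_inf (hXT t₁ ht₁) (hXT t₂ ht₂)).trans coordH_inf_le_diffH) hY))

theorem exists_mem_eq_on (hr : r ≠ 0) {T : Set (Fin ℓ)} (hTk : ∀ t ∈ T, (t : ℕ) < k)
    (hXT : ∀ t ∈ T, X ≤ coordH ℓ t) (hY : Y ∈ ArrLatIn ⊤ (interArr r ℓ k)) {v : Fin ℓ → ℂ}
    (hv : ∀ H ∈ interArr r ℓ k, X ⊔ Y ≤ H → v ∈ H) : ∃ y ∈ Y, ∀ t ∈ T, y t = v t := by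
  have hroot : ∀ {ζ η : ℂ}, ζ ^ r = 1 → η ^ r = 1 → (ζ⁻¹ * η) ^ r = 1 := fun hζ hη => by
    rw [mul_pow, inv_pow, hζ, hη, inv_one, one_mul]
  set R : Fin ℓ → ℂ → Prop := fun s c =>
    ∃ t ∈ T, ∃ ζ : ℂ, ζ ^ r = 1 ∧ Y ≤ diffH ℓ s t ζ ∧ c = ζ * v t
  obtain ⟨y, hy⟩ := exists_eq_of_functional R (by
    rintro s _ _ ⟨t₁, ht₁, ζ₁, hζ₁, hY₁, rfl⟩ ⟨t₂, ht₂, ζ₂, hζ₂, hY₂, rfl⟩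
    have h := apply_eq_mul_of_le_diffH hr hTk hXT hv ht₁ ht₂ (hroot hζ₁ hζ₂)
      (le_diffH_trans (diffH_symm (ne_zero_of_pow_eq_one hr hζ₁) ▸ hY₁) hY₂)
    rw [h, ← mul_assoc, mul_inv_cancel_left₀ (ne_zero_of_pow_eq_one hr hζ₁)])
  refine ⟨y, mem_arrLatIn_iff.1 hY y fun H hH hYH => ?_, fun t ht =>
    (hy t).1 _ ⟨t, ht, 1, one_pow r, fun x _ => by simp, (one_mul _).symm⟩⟩
  obtain ⟨s, -, rfl⟩ | ⟨p, q, -, ν, hν, rfl⟩ := hH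
  · rw [mem_coordH]
    by_cases h : ∃ c, R s c
    · obtain ⟨c, t, ht, ζ, hζ, hYζ, rfl⟩ := h
      have hYt := le_coordH_right_of_le_diffH (ne_zero_of_pow_eq_one hr hζ) hYζ hYH
      rw [(hy s).1 _ ⟨t, ht, ζ, hζ, hYζ, rfl⟩,
        mem_coordH.1 (hv _ (coordH_mem_interArr (hTk t ht)) (sup_le (hXT t ht) hYt)), mul_zero]
    · exact (hy s).2 (not_exists.1 h)
  · rw [mem_diffH]
    by_cases h : ∃ c, R q c
    · obtain ⟨c, t, ht, ζ, hζ, hYζ, rfl⟩ := h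
      rw [(hy q).1 _ ⟨t, ht, ζ, hζ, hYζ, rfl⟩, (hy p).1 _ ⟨t, ht, ν * ζ,
        by rw [mul_pow, hν, hζ, one_mul], le_diffH_trans hYH hYζ, (mul_assoc ν ζ (v t)).symm⟩]
    · have h' : ∀ c, ¬ R p c := by
        rintro _ ⟨t, ht, ζ, hζ, hYζ, rfl⟩
        refine h ⟨_, t, ht, ν⁻¹ * ζ, hroot hν hζ,
          le_diffH_trans (diffH_symm (ne_zero_of_pow_eq_one hr hν) ▸ hYH) hYζ, rfl⟩
      rw [(hy p).2 h', (hy q).2 (not_exists.1 h), mul_zero]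

theorem modularIn_of_mem_arrLatIn_boolArr (hr : r ≠ 0) (hX : X ∈ ArrLatIn ⊤ (boolArr ℓ k)) :
    ModularIn (ArrLatIn ⊤ (interArr r ℓ k)) X := by
  obtain ⟨S, hS, rfl⟩ := hX
  set T := {t : Fin ℓ | (t : ℕ) < k ∧ coordH ℓ t ∈ S}
  have hmem : ∀ x, (∀ t ∈ T, x t = 0) → x ∈ ⊤ ⊓ sInf S := fun x hx => by
    refine ⟨trivial, mem_sInf.2 fun H hH => ?_⟩
    obtain ⟨t, ht, rfl⟩ := hS hH
    exact mem_coordH.2 (hx t ⟨ht, hH⟩)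
  have hXT : ∀ t ∈ T, ⊤ ⊓ sInf S ≤ coordH ℓ t := fun t ht => inf_le_right.trans (sInf_le ht.2)
  refine ⟨⟨S, fun H hH => Or.inl (hS hH), rfl⟩, fun Y hY => mem_arrLatIn_iff.2 fun v hv => ?_⟩
  obtain ⟨y, hyY, hyv⟩ := exists_mem_eq_on hr (fun t ht => ht.1) hXT hY hv
  rw [← sub_add_cancel v y]
  exact add_mem_sup (hmem _ fun t ht => by rw [Pi.sub_apply, hyv t ht, sub_self]) hyY

end Backward

theorem stmt_10_general (r ℓ k : ℕ) (hr : 2 ≤ r) (hℓ : 3 ≤ ℓ)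
    (hexc : ¬(k = 0 ∧ ℓ = 3 ∧ r = 2))
    (X : Submodule ℂ (Fin ℓ → ℂ)) :
    ModularIn (ArrLatIn ⊤ (interArr r ℓ k)) X ↔
      (X ∈ ArrLatIn ⊤ (boolArr ℓ k) ∨ X ∈ interArr r ℓ k ∨ X = ⊥ ∨ X = ⊤) := by
  constructor
  · intro hmod
    rcases mem_or_eq_bot_of_modularIn hr hℓ hexc hmod with h | h | h
    exacts [Or.inl h, Or.inr (Or.inl h), Or.inr (Or.inr (Or.inl h))]
  · rintro (hB | hH | rfl | rfl)
    · exact modularIn_of_mem_arrLatIn_boolArr (by omega) hB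
    · exact modularIn_of_isCoatom hH (isCoatom_of_mem_interArr hH)
    · exact modularIn_bot (bot_mem_arrLatIn_interArr hr (by omega))
    · exact modularIn_top

/-- For `ℓ ≥ 3`, `0 ≤ k ≤ ℓ`, `r ≥ 2` with `(k,ℓ,r) ≠ (0,3,2)`, an element
`X ∈ L(A^k_ℓ(r))` is modular iff `X` lies in the lattice of the Boolean subarrangement
`B^k_ℓ`, or `X` is a hyperplane of `A^k_ℓ(r)`, or `X ∈ {0, ℂ^ℓ}`. -/
theorem stmt_10 (r ℓ k : ℕ) (hr : 2 ≤ r) (hℓ : 3 ≤ ℓ) (hk : k ≤ ℓ)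
    (hexc : ¬(k = 0 ∧ ℓ = 3 ∧ r = 2))
    (X : Submodule ℂ (Fin ℓ → ℂ)) (hX : X ∈ ArrLatIn ⊤ (interArr r ℓ k)) :
    ModularIn (ArrLatIn ⊤ (interArr r ℓ k)) X ↔
      (X ∈ ArrLatIn ⊤ (boolArr ℓ k) ∨ X ∈ interArr r ℓ k ∨ X = ⊥ ∨ X = ⊤) :=
  stmt_10_general r ℓ k hr hℓ hexc X
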